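/- arXiv:2404.00055 — 4 statements merged into one kernel-verified Lean document; each statement's English description precedes it below -/
import Mathlib

section
/- Fix N_t ≥ 1, K ≥ 1, reals P_T > 0, ρ > 0, σ² > 0, and nonzero channel vectors h_1, …, h_K ∈ ℂ^{N_t} with Q_k = h_k h_kᴴ. Consider the feasible set F of tuples (R, Γ, (W_k)_{k=1}^K) where R ∈ ℂ^{N_t×N_t} is Hermitian positive definite, each W_k is positive semidefinite, Γ_k ≥ 0 for all k, tr(R) ≤ P_T, R − Σ_{k=1}^K W_k is positive semidefinite, and tr(Q_k W_k) − Γ_k · tr(Q_k (R − W_k)) ≥ Γ_k σ² for all k, with objective Φ(R, Γ, W) = −Σ_{k=1}^K log(1 + Γ_k) + ρ · tr(R⁻¹). Suppose (R̄, Γ̄, (W̄_k)) ∈ F attains the minimum of Φ over F, and suppose tr(Q_k W̄_k) > 0 for every k. Define W̃_k = W̄_k Q_k W̄_kᴴ / tr(Q_k W̄_k) for each k. Then (R̄, Γ̄, (W̃_k)) ∈ F, it also attains the minimum of Φ over F, and rank(W̃_k) = 1 for every k. -/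
open Matrix ComplexOrder Finset

set_option linter.unusedSectionVars false

/-- The channel outer product `Q_k = h_k h_kᴴ`. -/
noncomputable def chanQ {N_t K : ℕ} (h : Fin K → Fin N_t → ℂ) (k : Fin K) :
    Matrix (Fin N_t) (Fin N_t) ℂ :=
  Matrix.vecMulVec (h k) (star (h k))

/-- Feasible set of the rank-relaxed joint sum-rate/CRB problem (problem (11)). -/
noncomputable def Feasible {N_t K : ℕ} (P_T σ2 : ℝ) (h : Fin K → Fin N_t → ℂ)
    (R : Matrix (Fin N_t) (Fin N_t) ℂ) (Γ : Fin K → ℝ)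
    (W : Fin K → Matrix (Fin N_t) (Fin N_t) ℂ) : Prop :=
  R.PosDef ∧ (∀ k, (W k).PosSemidef) ∧ (∀ k, 0 ≤ Γ k) ∧ R.trace.re ≤ P_T ∧
    (R - ∑ k, W k).PosSemidef ∧
    ∀ k, (chanQ h k * W k).trace.re - Γ k * (chanQ h k * (R - W k)).trace.re ≥ Γ k * σ2

/-- Objective `Φ(R, Γ) = −Σ_k log(1+Γ_k) + ρ tr(R⁻¹)`. -/
noncomputable def Phi {N_t K : ℕ} (ρ : ℝ) (R : Matrix (Fin N_t) (Fin N_t) ℂ)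
    (Γ : Fin K → ℝ) : ℝ :=
  -(∑ k, Real.log (1 + Γ k)) + ρ * (R⁻¹).trace.re

section Aux

variable {n : Type*} [Fintype n] [DecidableEq n]

private lemma aux_trace (u : n → ℂ) (M : Matrix n n ℂ) :
    (Matrix.vecMulVec u (star u) * M).trace = star u ⬝ᵥ (M *ᵥ u) := by
  simp only [Matrix.trace, Matrix.diag, Matrix.mul_apply, Matrix.vecMulVec_apply,
    dotProduct, Matrix.mulVec, Pi.star_apply, Finset.mul_sum]
  rw [Finset.sum_comm]
  exact Finset.sum_congr rfl fun j _ => Finset.sum_congr rfl fun i _ => by ring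

private lemma aux_outer (M : Matrix n n ℂ) (u : n → ℂ) :
    M * Matrix.vecMulVec u (star u) * Mᴴ = Matrix.vecMulVec (M *ᵥ u) (star (M *ᵥ u)) := by
  ext i l
  simp only [Matrix.mul_apply, Matrix.vecMulVec_apply, Matrix.conjTranspose_apply,
    Matrix.mulVec, dotProduct, Pi.star_apply, star_sum, star_mul']
  rw [Finset.sum_mul_sum, Finset.sum_comm]
  simp only [Finset.sum_mul]
  refine Finset.sum_congr rfl fun a _ => Finset.sum_congr rfl fun b _ => by ring

private lemma aux_mulVec (u x : n → ℂ) :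
    Matrix.vecMulVec u (star u) *ᵥ x = (star u ⬝ᵥ x) • u := by
  ext i
  simp only [Matrix.mulVec, Matrix.vecMulVec_apply, dotProduct, Pi.star_apply, Pi.smul_apply,
    smul_eq_mul, Finset.sum_mul]
  exact Finset.sum_congr rfl fun j _ => by ring

private lemma herm_conj {W : Matrix n n ℂ} (hW : W.IsHermitian) (u z : n → ℂ) :
    star (star u ⬝ᵥ W *ᵥ z) = star z ⬝ᵥ W *ᵥ u := by
  rw [Matrix.star_dotProduct, star_star, Matrix.star_mulVec, hW.eq]
  rw [Matrix.dotProduct_mulVec]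

private lemma star_mulVec_dot {W : Matrix n n ℂ} (hW : W.IsHermitian) (u x : n → ℂ) :
    star (W *ᵥ u) ⬝ᵥ x = star u ⬝ᵥ W *ᵥ x := by
  rw [Matrix.star_mulVec, hW.eq, ← Matrix.dotProduct_mulVec]

private lemma vecMulVec_hermitian (v : n → ℂ) : (Matrix.vecMulVec v (star v)).IsHermitian := by
  ext i j
  simp [Matrix.conjTranspose_apply, Matrix.vecMulVec_apply, mul_comm]

private lemma vecMulVec_posSemidef (v : n → ℂ) : (Matrix.vecMulVec v (star v)).PosSemidef := by
  refine .of_dotProduct_mulVec_nonneg (vecMulVec_hermitian v) fun x => ?_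
  rw [aux_mulVec, dotProduct_smul]
  have hx : star x ⬝ᵥ v = star (star v ⬝ᵥ x) := by
    rw [Matrix.star_dotProduct]
  rw [hx, smul_eq_mul]
  exact mul_star_self_nonneg _

private lemma real_mul_nonneg {c : ℝ} (hc : 0 ≤ c) {z : ℂ} (hz : 0 ≤ z) : 0 ≤ (c : ℂ) * z := by
  rw [Complex.nonneg_iff] at hz ⊢
  constructor
  · simpa [Complex.mul_re] using mul_nonneg hc hz.1
  · simp [Complex.mul_im, ← hz.2]

private lemma psd_real_smul {c : ℝ} (hc : 0 ≤ c) {A : Matrix n n ℂ} (hA : A.PosSemidef) :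
    ((c : ℂ) • A).PosSemidef := by
  refine .of_dotProduct_mulVec_nonneg ?_ fun x => ?_
  · rw [Matrix.IsHermitian, Matrix.conjTranspose_smul, hA.1.eq, Complex.star_def,
      Complex.conj_ofReal]
  · rw [Matrix.smul_mulVec, dotProduct_smul, smul_eq_mul]
    exact real_mul_nonneg hc (hA.dotProduct_mulVec_nonneg x)

private lemma psd_add {A B : Matrix n n ℂ} (hA : A.PosSemidef) (hB : B.PosSemidef) :
    (A + B).PosSemidef := by
  refine .of_dotProduct_mulVec_nonneg (hA.1.add hB.1) fun x => ?_
  rw [Matrix.add_mulVec, dotProduct_add]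
  exact add_nonneg (hA.dotProduct_mulVec_nonneg x) (hB.dotProduct_mulVec_nonneg x)

private lemma psd_sum {ι : Type*} (s : Finset ι) (f : ι → Matrix n n ℂ)
    (hf : ∀ i ∈ s, (f i).PosSemidef) : (∑ i ∈ s, f i).PosSemidef := by
  classical
  induction s using Finset.induction with
  | empty => simpa using (Matrix.PosSemidef.zero : (0 : Matrix n n ℂ).PosSemidef)
  | insert _ _ hnot ih =>
      rw [Finset.sum_insert hnot]
      exact psd_add (hf _ (Finset.mem_insert_self _ _))
        (ih fun i hi => hf i (Finset.mem_insert_of_mem hi))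

private lemma psd_cs {W : Matrix n n ℂ} (hW : W.PosSemidef) (hv x : n → ℂ) :
    0 ≤ (star hv ⬝ᵥ W *ᵥ hv) * ((star hv ⬝ᵥ W *ᵥ hv) * (star x ⬝ᵥ W *ᵥ x)
        - (star x ⬝ᵥ W *ᵥ hv) * (star hv ⬝ᵥ W *ᵥ x)) := by
  set t := star hv ⬝ᵥ W *ᵥ hv with ht
  set a := star hv ⬝ᵥ W *ᵥ x with ha
  have hxh : star x ⬝ᵥ W *ᵥ hv = star a := (herm_conj hW.1 hv x).symm
  have htt : star t = t := herm_conj hW.1 hv hv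
  have key := hW.dotProduct_mulVec_nonneg (t • x - a • hv)
  have expand : star (t • x - a • hv) ⬝ᵥ W *ᵥ (t • x - a • hv)
      = t * (t * (star x ⬝ᵥ W *ᵥ x) - star a * a) := by
    simp only [star_sub, star_smul, Matrix.mulVec_sub, Matrix.mulVec_smul,
      sub_dotProduct, dotProduct_sub, smul_dotProduct,
      dotProduct_smul, smul_eq_mul, ← ht, ← ha, hxh, htt]
    ring
  rw [expand] at key
  rw [hxh]
  exact key

private lemma rank_vecMulVec_one (u : n → ℂ) (hu : u ≠ 0) :
    (Matrix.vecMulVec u (star u)).rank = 1 := by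
  rw [Matrix.vecMulVec_eq Unit, ← Matrix.conjTranspose_replicateCol,
    Matrix.rank_self_mul_conjTranspose]
  refine le_antisymm ((Matrix.rank_le_card_width _).trans (by simp)) ?_
  rw [Nat.one_le_iff_ne_zero, Matrix.rank]
  intro h0
  have hmem : u ∈ LinearMap.range (Matrix.replicateCol Unit u).mulVecLin :=
    ⟨fun _ => 1, by ext i; simp [Matrix.mulVec, Matrix.replicateCol, dotProduct]⟩
  rw [Submodule.finrank_eq_zero] at h0
  rw [h0] at hmem
  exact hu (by simpa using hmem)

end Aux

/-- Proposition 1: from any optimal solution `(R̄, Γ̄, W̄)` of the relaxed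
problem with `tr(Q_k W̄_k) > 0`, the matrices `W̃_k = W̄_k Q_k W̄_kᴴ / tr(Q_k W̄_k)` give
another optimal solution `(R̄, Γ̄, W̃)` with `rank(W̃_k) = 1` for all `k`. -/
theorem relaxation_tightness (N_t K : ℕ) (hN : 1 ≤ N_t) (hK : 1 ≤ K)
    (P_T ρ σ2 : ℝ) (hP : 0 < P_T) (hρ : 0 < ρ) (hσ : 0 < σ2)
    (h : Fin K → Fin N_t → ℂ) (hne : ∀ k, h k ≠ 0)
    (Rb : Matrix (Fin N_t) (Fin N_t) ℂ) (Γb : Fin K → ℝ)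
    (Wb : Fin K → Matrix (Fin N_t) (Fin N_t) ℂ)
    (hfeas : Feasible P_T σ2 h Rb Γb Wb)
    (hopt : ∀ R Γ W, Feasible P_T σ2 h R Γ W → Phi ρ Rb Γb ≤ Phi ρ R Γ)
    (hpos : ∀ k, 0 < (chanQ h k * Wb k).trace.re)
    (Wt : Fin K → Matrix (Fin N_t) (Fin N_t) ℂ)
    (hWt : ∀ k, Wt k = ((chanQ h k * Wb k).trace)⁻¹ • (Wb k * chanQ h k * (Wb k)ᴴ)) :
    Feasible P_T σ2 h Rb Γb Wt ∧
      (∀ R Γ W, Feasible P_T σ2 h R Γ W → Phi ρ Rb Γb ≤ Phi ρ R Γ) ∧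
      ∀ k, (Wt k).rank = 1 := by
  obtain ⟨hRpd, hWpsd, hΓ, hPow, hRW, hSINR⟩ := hfeas
  -- notation
  set v : Fin K → Fin N_t → ℂ := fun k => Wb k *ᵥ h k with hv
  set tC : Fin K → ℂ := fun k => (chanQ h k * Wb k).trace with htC
  set r : Fin K → ℝ := fun k => (tC k).re with hrdef
  have htr : ∀ k, tC k = star (h k) ⬝ᵥ (Wb k *ᵥ h k) := fun k => aux_trace (h k) (Wb k)
  have hts : ∀ k, 0 ≤ tC k := fun k => (htr k) ▸ (hWpsd k).dotProduct_mulVec_nonneg (h k)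
  have hrpos : ∀ k, 0 < r k := fun k => hpos k
  have hrc : ∀ k, tC k = ((r k : ℝ) : ℂ) := by
    intro k
    have him := (Complex.nonneg_iff.1 (hts k)).2
    exact Complex.ext (by simp [hrdef]) (by simp [← him])
  have htne : ∀ k, tC k ≠ 0 := by
    intro k hk
    exact absurd (hrpos k) (by simp [hrdef, hk])
  -- Wt in outer-product form
  have hWt' : ∀ k, Wt k = (tC k)⁻¹ • Matrix.vecMulVec (v k) (star (v k)) := by
    intro k
    rw [hWt k]
    congr 1
    exact aux_outer (Wb k) (h k)
  -- PSD of Wt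
  have hWtpsd : ∀ k, (Wt k).PosSemidef := by
    intro k
    rw [hWt' k, hrc k, ← Complex.ofReal_inv]
    exact psd_real_smul (inv_nonneg.2 (hrpos k).le) (vecMulVec_posSemidef (v k))
  -- key dot-product computations
  have hvdotl : ∀ k (x : Fin N_t → ℂ), star (v k) ⬝ᵥ x = star (h k) ⬝ᵥ (Wb k *ᵥ x) :=
    fun k x => star_mulVec_dot (hWpsd k).1 (h k) x
  have hWtdot : ∀ k (x : Fin N_t → ℂ),
      star x ⬝ᵥ (Wt k *ᵥ x)
        = (tC k)⁻¹ * ((star x ⬝ᵥ (Wb k *ᵥ h k)) * (star (h k) ⬝ᵥ (Wb k *ᵥ x))) := by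
    intro k x
    rw [hWt' k, Matrix.smul_mulVec, aux_mulVec, dotProduct_smul, dotProduct_smul,
      smul_eq_mul, smul_eq_mul, hvdotl k x]
    ring
  -- Wb k - Wt k is PSD (Cauchy-Schwarz)
  have hsub : ∀ k, (Wb k - Wt k).PosSemidef := by
    intro k
    refine .of_dotProduct_mulVec_nonneg ((hWpsd k).1.sub (hWtpsd k).1) fun x => ?_
    rw [Matrix.sub_mulVec, dotProduct_sub, hWtdot k x]
    have key := psd_cs (hWpsd k) (h k) x
    rw [← htr k, hrc k] at key
    have hrew : star x ⬝ᵥ (Wb k *ᵥ x)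
        - (tC k)⁻¹ * ((star x ⬝ᵥ (Wb k *ᵥ h k)) * (star (h k) ⬝ᵥ (Wb k *ᵥ x)))
        = ((r k)⁻¹ : ℝ) * (((r k)⁻¹ : ℝ) * (((r k : ℝ) : ℂ)
            * (((r k : ℝ) : ℂ) * (star x ⬝ᵥ (Wb k *ᵥ x))
              - (star x ⬝ᵥ (Wb k *ᵥ h k)) * (star (h k) ⬝ᵥ (Wb k *ᵥ x))))) := by
      rw [hrc k]
      have : ((r k : ℝ) : ℂ) ≠ 0 := by
        simpa using (hrpos k).ne'
      push_cast
      field_simp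
    rw [hrew]
    exact real_mul_nonneg (inv_nonneg.2 (hrpos k).le)
      (real_mul_nonneg (inv_nonneg.2 (hrpos k).le) key)
  -- trace identity
  have htrWt : ∀ k, (chanQ h k * Wt k).trace = tC k := by
    intro k
    have h1 : (chanQ h k * Wt k).trace = star (h k) ⬝ᵥ (Wt k *ᵥ h k) :=
      aux_trace (h k) (Wt k)
    rw [h1, hWtdot k (h k), ← htr k]
    field_simp
  -- feasibility
  have hfeasWt : Feasible P_T σ2 h Rb Γb Wt := by
    refine ⟨hRpd, hWtpsd, hΓ, hPow, ?_, ?_⟩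
    · have hdecomp : Rb - ∑ k, Wt k = (Rb - ∑ k, Wb k) + ∑ k, (Wb k - Wt k) := by
        rw [Finset.sum_sub_distrib]
        abel
      rw [hdecomp]
      exact psd_add hRW (psd_sum _ _ fun k _ => hsub k)
    · intro k
      have h2 : (chanQ h k * (Rb - Wt k)).trace = (chanQ h k * (Rb - Wb k)).trace := by
        rw [Matrix.mul_sub, Matrix.mul_sub, Matrix.trace_sub, Matrix.trace_sub, htrWt k]
      have h3 : (chanQ h k * Wt k).trace.re = (chanQ h k * Wb k).trace.re := by
        rw [htrWt k]
      rw [h3, h2]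
      exact hSINR k
  refine ⟨hfeasWt, hopt, ?_⟩
  -- rank one
  intro k
  have hvne : v k ≠ 0 := by
    intro h0
    apply htne k
    rw [htr k, show Wb k *ᵥ h k = 0 from h0]
    simp
  set s : ℝ := Real.sqrt (r k) with hs
  have hspos : 0 < s := Real.sqrt_pos.2 (hrpos k)
  set u : Fin N_t → ℂ := ((s : ℂ))⁻¹ • v k with hu
  have hune : u ≠ 0 := smul_ne_zero (by simpa using hspos.ne') hvne
  have hWtu : Wt k = Matrix.vecMulVec u (star u) := by
    rw [hWt' k, hrc k]
    ext i j
    simp only [Matrix.smul_apply, Matrix.vecMulVec_apply, hu, Pi.smul_apply, Pi.star_apply,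
      smul_eq_mul, star_mul', smul_eq_mul]
    have hss : (s : ℂ) * (s : ℂ) = ((r k : ℝ) : ℂ) := by
      rw [← Complex.ofReal_mul, Real.mul_self_sqrt (hrpos k).le]
    have hstar : star ((s : ℂ))⁻¹ = ((s : ℂ))⁻¹ := by
      simp [Complex.star_def, Complex.conj_ofReal]
    rw [hstar]
    rw [← hss]
    field_simp
  rw [hWtu]
  exact rank_vecMulVec_one u hune
end

section
/- Let N_t ≥ 2, let h ∈ ℂ^{N_t} be nonzero, and let P_T > 0, ρ > 0, σ² > 0. Suppose Γ₁ is a real number with 0 < Γ₁ < P_T‖h‖²/σ² satisfying the equation ‖h‖²/(1+Γ₁) = ρσ²( (‖h‖²(N_t−1))²/(P_T‖h‖² − Γ₁σ²)² − ‖h‖⁴/(Γ₁²σ⁴) ). Let u₁ = h/‖h‖ and let u₂, …, u_{N_t} complete u₁ to an orthonormal basis of ℂ^{N_t}. Define W₁ = Γ₁σ² h hᴴ / ‖h‖⁴, λ₁ = Γ₁σ²/‖h‖², λ_i = (P_T‖h‖² − Γ₁σ²)/(‖h‖²(N_t−1)) for i = 2, …, N_t, and R_X = Σ_{i=1}^{N_t}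 λ_i u_i u_iᴴ. Then (W₁, R_X, Γ₁) is feasible for the single-user problem — i.e. R_X is Hermitian positive definite, tr(R_X) ≤ P_T, R_X ⪰ W₁ ⪰ 0, and tr(Q₁W₁) − Γ₁ tr(Q₁(R_X − W₁)) ≥ Γ₁σ² with Q₁ = h hᴴ — and for every feasible (W, R, Γ) with R Hermitian positive definite, tr(R) ≤ P_T, R ⪰ W ⪰ 0, Γ ≥ 0, and tr(Q₁W) − Γ tr(Q₁(R − W)) ≥ Γσ², one has −log(1+Γ) + ρ tr(R⁻¹) ≥ −log(1+Γ₁) + ρ tr(R_X⁻¹). -/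
open Matrix ComplexOrder Finset

set_option linter.unusedSectionVars false
set_option maxHeartbeats 1600000

section Aux
variable {n : Type*} [Fintype n] [DecidableEq n]

lemma aux_trace_vmv (a b : n → ℂ) (A : Matrix n n ℂ) :
    (Matrix.vecMulVec a b * A).trace = b ⬝ᵥ (A *ᵥ a) := by
  simp only [Matrix.trace, Matrix.diag, Matrix.mul_apply, Matrix.vecMulVec_apply,
    dotProduct, Matrix.mulVec, Finset.mul_sum, Finset.sum_mul]
  rw [Finset.sum_comm]
  exact Finset.sum_congr rfl fun i _ => Finset.sum_congr rfl fun j _ => by ring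

lemma aux_vmv_mulVec (a b x : n → ℂ) :
    Matrix.vecMulVec a b *ᵥ x = (b ⬝ᵥ x) • a := by
  funext i
  simp only [Matrix.mulVec, Matrix.vecMulVec_apply, dotProduct, Pi.smul_apply,
    smul_eq_mul, Finset.sum_mul]
  exact Finset.sum_congr rfl fun j _ => by ring

lemma aux_conjT_vmv (v : n → ℂ) :
    (Matrix.vecMulVec v (star v))ᴴ = Matrix.vecMulVec v (star v) := by
  ext i j
  simp [Matrix.conjTranspose_apply, Matrix.vecMulVec_apply, mul_comm]

lemma aux_star_dot (v x : n → ℂ) : star x ⬝ᵥ v = star ((star v) ⬝ᵥ x) := by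
  simp [dotProduct, Pi.star_apply, map_sum]
  exact Finset.sum_congr rfl fun j _ => by ring

lemma aux_quadform_vmv (v x : n → ℂ) :
    star x ⬝ᵥ (Matrix.vecMulVec v (star v)) *ᵥ x
      = star ((star v) ⬝ᵥ x) * ((star v) ⬝ᵥ x) := by
  rw [aux_vmv_mulVec]
  simp only [dotProduct_smul, smul_eq_mul]
  rw [mul_comm, aux_star_dot]

lemma aux_mul_vmv (a b c d : n → ℂ) :
    Matrix.vecMulVec a b * Matrix.vecMulVec c d = (b ⬝ᵥ c) • Matrix.vecMulVec a d := by
  ext i j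
  simp only [Matrix.mul_apply, Matrix.vecMulVec_apply, Matrix.smul_apply,
    dotProduct, smul_eq_mul, Finset.sum_mul, Finset.mul_sum]
  exact Finset.sum_congr rfl fun k _ => by ring

lemma aux_sum_mulVec {α : Type*} (s : Finset α) (f : α → Matrix n n ℂ) (x : n → ℂ) :
    (∑ i ∈ s, f i) *ᵥ x = ∑ i ∈ s, f i *ᵥ x := by
  funext j
  simp only [Matrix.mulVec, dotProduct, Finset.sum_apply, Matrix.sum_apply,
    Finset.sum_mul]
  rw [Finset.sum_comm]

lemma aux_dot_sum {α : Type*} (s : Finset α) (v : n → ℂ) (f : α → (n → ℂ)) :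
    v ⬝ᵥ (∑ i ∈ s, f i) = ∑ i ∈ s, v ⬝ᵥ f i := by
  simp only [dotProduct, Finset.sum_apply, Finset.mul_sum]
  rw [Finset.sum_comm]

lemma aux_complete (u : n → n → ℂ)
    (huon : ∀ i j, star (u i) ⬝ᵥ u j = if i = j then 1 else 0) :
    (∑ i, Matrix.vecMulVec (u i) (star (u i))) = (1 : Matrix n n ℂ) := by
  have h1 : (Matrix.of fun i j => star (u i j)) * (Matrix.of u)ᵀ = 1 := by
    ext i j
    simpa [Matrix.mul_apply, dotProduct, Matrix.one_apply] using huon i j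
  have h2 : (Matrix.of u)ᵀ * (Matrix.of fun i j => star (u i j)) = 1 :=
    mul_eq_one_comm.mp h1
  ext j k
  have := congrFun (congrFun h2 j) k
  simp only [Matrix.mul_apply, Matrix.transpose_apply, Matrix.of_apply] at this
  simpa [Matrix.sum_apply, Matrix.vecMulVec_apply] using this

lemma aux_trace_expand (u : n → n → ℂ)
    (huon : ∀ i j, star (u i) ⬝ᵥ u j = if i = j then 1 else 0) (A : Matrix n n ℂ) :
    A.trace = ∑ i, star (u i) ⬝ᵥ (A *ᵥ u i) := by
  calc A.trace = ((∑ i, Matrix.vecMulVec (u i) (star (u i))) * A).trace := by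
        rw [aux_complete u huon, Matrix.one_mul]
    _ = ∑ i, (Matrix.vecMulVec (u i) (star (u i)) * A).trace := by
        rw [Finset.sum_mul, Matrix.trace_sum]
    _ = ∑ i, star (u i) ⬝ᵥ (A *ᵥ u i) := by
        exact Finset.sum_congr rfl fun i _ => aux_trace_vmv _ _ _

lemma aux_smul_vmv_psd {c : ℝ} (hc : 0 ≤ c) (v : n → ℂ) :
    (((c : ℝ) : ℂ) • Matrix.vecMulVec v (star v)).PosSemidef := by
  rw [Matrix.posSemidef_iff_dotProduct_mulVec]
  constructor
  · show _ᴴ = _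
    rw [Matrix.conjTranspose_smul, aux_conjT_vmv]
    congr 1
    simp [Complex.star_def, Complex.conj_ofReal]
  · intro x
    rw [Matrix.smul_mulVec, dotProduct_smul, aux_quadform_vmv]
    have : star ((star v) ⬝ᵥ x) * ((star v) ⬝ᵥ x)
        = ((Complex.normSq ((star v) ⬝ᵥ x) : ℝ) : ℂ) := by
      rw [Complex.normSq_eq_conj_mul_self]; rfl
    rw [this, smul_eq_mul, ← Complex.ofReal_mul]
    exact Complex.zero_le_real.mpr (mul_nonneg hc (Complex.normSq_nonneg _))

lemma aux_cs (R : Matrix n n ℂ) (hR : R.PosDef) (x : n → ℂ) (hx : star x ⬝ᵥ x = 1) :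
    1 / (star x ⬝ᵥ R *ᵥ x).re ≤ (star x ⬝ᵥ R⁻¹ *ᵥ x).re := by
  have hxne : x ≠ 0 := by
    intro h0; rw [h0] at hx; simp at hx
  have hb : 0 < (star x ⬝ᵥ R *ᵥ x).re := by
    have := hR.re_dotProduct_pos hxne
    simpa [RCLike.re_to_complex] using this
  have hRinv : R⁻¹.PosDef := hR.inv
  have hd : 0 < (star x ⬝ᵥ R⁻¹ *ᵥ x).re := by
    have := hRinv.re_dotProduct_pos hxne
    simpa [RCLike.re_to_complex] using this
  set b := (star x ⬝ᵥ R *ᵥ x).re with hbdef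
  set d := (star x ⬝ᵥ R⁻¹ *ᵥ x).re with hddef
  have hdet : IsUnit R.det := (Matrix.isUnit_iff_isUnit_det R).mp hR.isUnit
  have hRRinv : R * R⁻¹ = 1 := Matrix.mul_nonsing_inv R hdet
  set y := R⁻¹ *ᵥ x with hy
  have hRy : R *ᵥ y = x := by
    rw [hy, Matrix.mulVec_mulVec, hRRinv, Matrix.one_mulVec]
  have hcross : ∀ z, star y ⬝ᵥ z = star x ⬝ᵥ (R⁻¹ *ᵥ z) := by
    intro z
    rw [hy, Matrix.star_mulVec, hRinv.isHermitian.eq, Matrix.dotProduct_mulVec]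
  set t := 1 / d with ht
  have key : 0 ≤ b - t - t + t * t * d := by
    have hpsd := hR.posSemidef.re_dotProduct_nonneg (x - (t : ℂ) • y)
    have expand : star (x - (t:ℂ) • y) ⬝ᵥ R *ᵥ (x - (t:ℂ) • y)
        = (star x ⬝ᵥ R *ᵥ x) - (t:ℂ) * 1 - (t:ℂ) * 1 + (t:ℂ)^2 * (star x ⬝ᵥ R⁻¹ *ᵥ x) := by
      have h1 : star x ⬝ᵥ R *ᵥ y = 1 := by rw [hRy, hx]
      have h2 : star y ⬝ᵥ R *ᵥ x = 1 := by
        rw [hcross (R *ᵥ x), Matrix.mulVec_mulVec, Matrix.nonsing_inv_mul R hdet,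
          Matrix.one_mulVec, hx]
      have h3 : star y ⬝ᵥ R *ᵥ y = star x ⬝ᵥ R⁻¹ *ᵥ x := by
        rw [hcross (R *ᵥ y), hRy]
      rw [star_sub, star_smul, Matrix.mulVec_sub, Matrix.mulVec_smul]
      simp only [sub_dotProduct, dotProduct_sub, smul_dotProduct,
        dotProduct_smul, smul_eq_mul, star_trivial, Complex.star_def,
        Complex.conj_ofReal]
      rw [h1, h2, h3]
      ring
    rw [expand] at hpsd
    simpa [RCLike.re_to_complex, Complex.sub_re, Complex.add_re, Complex.mul_re,
      Complex.ofReal_re, Complex.ofReal_im, pow_two] using hpsd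
  have htd : t * d = 1 := by
    rw [ht]; field_simp
  have hbd : t ≤ b := by nlinarith [key, htd]
  rw [div_le_iff₀ hb]
  have h1d : (1:ℝ) ≤ b * d := by
    have := mul_le_mul_of_nonneg_right hbd (le_of_lt hd)
    rw [htd] at this; linarith
  linarith [h1d]

end Aux

/-- Theorem 1, single-user closed-form solution: if `Γ₁` solves the
univariate equation (16), then the closed-form point `(W₁, R_X, Γ₁)` built from
`λ₁ = Γ₁σ²/‖h‖²`, `λ_i = (P_T‖h‖² − Γ₁σ²)/(‖h‖²(N_t−1))` and the orthonormal basis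
`u₁ = h/‖h‖, u₂, …` is feasible for the single-user problem (15) and globally optimal.
Here `nh2 = ‖h‖² = hᴴh`. -/
theorem single_user_closed_form (N_t : ℕ) (hN : 2 ≤ N_t)
    (h : Fin N_t → ℂ) (hh : h ≠ 0)
    (P_T ρ σ2 : ℝ) (hP : 0 < P_T) (hρ : 0 < ρ) (hσ : 0 < σ2)
    (nh2 : ℝ) (hnh2 : nh2 = (star h ⬝ᵥ h).re)
    (Γ₁ : ℝ) (hΓpos : 0 < Γ₁) (hΓub : Γ₁ < P_T * nh2 / σ2)
    (heq : nh2 / (1 + Γ₁) =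
      ρ * σ2 * ((nh2 * ((N_t : ℝ) - 1)) ^ 2 / (P_T * nh2 - Γ₁ * σ2) ^ 2
        - nh2 ^ 2 / (Γ₁ ^ 2 * σ2 ^ 2)))
    (u : Fin N_t → Fin N_t → ℂ)
    (huon : ∀ i j, star (u i) ⬝ᵥ u j = if i = j then 1 else 0)
    (hu0 : u ⟨0, by omega⟩ = ((Real.sqrt nh2 : ℝ) : ℂ)⁻¹ • h)
    (lam : Fin N_t → ℝ)
    (hlam0 : lam ⟨0, by omega⟩ = Γ₁ * σ2 / nh2)
    (hlami : ∀ i : Fin N_t, i ≠ ⟨0, by omega⟩ →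
      lam i = (P_T * nh2 - Γ₁ * σ2) / (nh2 * ((N_t : ℝ) - 1)))
    (W₁ R_X : Matrix (Fin N_t) (Fin N_t) ℂ)
    (hW₁ : W₁ = (((Γ₁ * σ2 / nh2 ^ 2 : ℝ)) : ℂ) • Matrix.vecMulVec h (star h))
    (hRX : R_X = ∑ i, ((lam i : ℝ) : ℂ) • Matrix.vecMulVec (u i) (star (u i))) :
    (R_X.PosDef ∧ R_X.trace.re ≤ P_T ∧ (R_X - W₁).PosSemidef ∧ W₁.PosSemidef ∧
      (Matrix.vecMulVec h (star h) * W₁).trace.re -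
          Γ₁ * (Matrix.vecMulVec h (star h) * (R_X - W₁)).trace.re ≥ Γ₁ * σ2) ∧
    (∀ (W R : Matrix (Fin N_t) (Fin N_t) ℂ) (Γ : ℝ),
      R.PosDef → R.trace.re ≤ P_T → (R - W).PosSemidef → W.PosSemidef → 0 ≤ Γ →
      (Matrix.vecMulVec h (star h) * W).trace.re -
          Γ * (Matrix.vecMulVec h (star h) * (R - W)).trace.re ≥ Γ * σ2 →
      -Real.log (1 + Γ₁) + ρ * (R_X⁻¹).trace.re ≤ -Real.log (1 + Γ) + ρ * (R⁻¹).trace.re) := by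
  -- ### basic scalar facts
  have hNR : (2:ℝ) ≤ (N_t:ℝ) := by exact_mod_cast hN
  set n1 : ℝ := (N_t:ℝ) - 1 with hn1
  have hn1ge : (1:ℝ) ≤ n1 := by simp only [hn1]; linarith
  have hn1pos : 0 < n1 := lt_of_lt_of_le one_pos hn1ge
  have hnh2pos : 0 < nh2 := by
    rw [hnh2]
    have hdot : star h ⬝ᵥ h = ((∑ i, Complex.normSq (h i) : ℝ) : ℂ) := by
      simp only [dotProduct, Pi.star_apply, Complex.star_def, Complex.ofReal_sum]
      exact Finset.sum_congr rfl fun i _ => Complex.normSq_eq_conj_mul_self.symm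
    rw [hdot, Complex.ofReal_re]
    obtain ⟨i, hi⟩ := Function.ne_iff.mp hh
    exact Finset.sum_pos' (fun j _ => Complex.normSq_nonneg _)
      ⟨i, Finset.mem_univ i, by simpa [Complex.normSq_pos] using hi⟩
  have hnh2ne : nh2 ≠ 0 := ne_of_gt hnh2pos
  have hsqpos : 0 < Real.sqrt nh2 := Real.sqrt_pos.mpr hnh2pos
  have hsq2 : Real.sqrt nh2 * Real.sqrt nh2 = nh2 := Real.mul_self_sqrt hnh2pos.le
  have hcastne : ((Real.sqrt nh2 : ℝ) : ℂ) ≠ 0 := by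
    simpa using ne_of_gt hsqpos
  set i0 : Fin N_t := ⟨0, by omega⟩ with hi0
  have hhu : h = ((Real.sqrt nh2 : ℝ) : ℂ) • u i0 := by
    rw [hu0, smul_smul, mul_inv_cancel₀ hcastne, one_smul]
  have hshc : star h ⬝ᵥ h = ((nh2 : ℝ) : ℂ) := by
    have hdot : star h ⬝ᵥ h = ((∑ i, Complex.normSq (h i) : ℝ) : ℂ) := by
      simp only [dotProduct, Pi.star_apply, Complex.star_def, Complex.ofReal_sum]
      exact Finset.sum_congr rfl fun i _ => Complex.normSq_eq_conj_mul_self.symm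
    rw [hdot]
    norm_cast
    rw [hnh2, hdot, Complex.ofReal_re]
  have hPTΓ : Γ₁ * σ2 < P_T * nh2 := (lt_div_iff₀ hσ).mp hΓub
  have hlam0pos : 0 < lam i0 := by rw [hlam0]; positivity
  have hlamipos : ∀ i, i ≠ i0 → 0 < lam i := fun i hi => by
    rw [hlami i hi]
    exact div_pos (by linarith) (by positivity)
  have hlampos : ∀ i, 0 < lam i := fun i => by
    by_cases hc : i = i0
    · rw [hc]; exact hlam0pos
    · exact hlamipos i hc
  -- ### R_X structure
  have hcompl := aux_complete u huon
  have hRXherm : R_X.IsHermitian := by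
    show R_Xᴴ = R_X
    rw [hRX, Matrix.conjTranspose_sum]
    refine Finset.sum_congr rfl fun i _ => ?_
    rw [Matrix.conjTranspose_smul, aux_conjT_vmv]
    congr 1
    simp [Complex.star_def, Complex.conj_ofReal]
  have hform : ∀ (A : Matrix (Fin N_t) (Fin N_t) ℂ) (c : Fin N_t → ℝ),
      A = ∑ i, ((c i : ℝ) : ℂ) • Matrix.vecMulVec (u i) (star (u i)) →
      ∀ x, star x ⬝ᵥ A *ᵥ x = ((∑ i, c i * Complex.normSq (star (u i) ⬝ᵥ x) : ℝ) : ℂ) := by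
    intro A c hA x
    rw [hA, aux_sum_mulVec, aux_dot_sum]
    rw [Complex.ofReal_sum]
    refine Finset.sum_congr rfl fun i _ => ?_
    rw [Matrix.smul_mulVec, dotProduct_smul, aux_quadform_vmv, smul_eq_mul,
      Complex.ofReal_mul]
    congr 1
    rw [Complex.normSq_eq_conj_mul_self]; rfl
  have hRXpd : R_X.PosDef := by
    refine Matrix.posDef_iff_dotProduct_mulVec.mpr ⟨hRXherm, fun x hx => ?_⟩
    rw [hform R_X lam hRX x]
    rw [show (0:ℂ) = ((0:ℝ):ℂ) by norm_num]
    rw [Complex.real_lt_real]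
    have hex : ∃ i, star (u i) ⬝ᵥ x ≠ 0 := by
      by_contra hall
      push_neg at hall
      apply hx
      have hx1 : x = (∑ i, Matrix.vecMulVec (u i) (star (u i))) *ᵥ x := by
        rw [hcompl, Matrix.one_mulVec]
      rw [aux_sum_mulVec] at hx1
      rw [hx1]
      refine Finset.sum_eq_zero fun i _ => ?_
      rw [aux_vmv_mulVec, hall i, zero_smul]
    obtain ⟨i, hi⟩ := hex
    refine Finset.sum_pos' (fun j _ => mul_nonneg (hlampos j).le (Complex.normSq_nonneg _))
      ⟨i, Finset.mem_univ i, mul_pos (hlampos i) (Complex.normSq_pos.mpr hi)⟩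
  have htrP : ∀ i, (Matrix.vecMulVec (u i) (star (u i))).trace = 1 := by
    intro i
    have h1 := huon i i
    rw [if_pos rfl] at h1
    rw [← h1]
    simp only [Matrix.trace, Matrix.diag, Matrix.vecMulVec_apply, dotProduct,
      Pi.star_apply]
    exact Finset.sum_congr rfl fun j _ => by ring
  have htrgen : ∀ c : Fin N_t → ℝ,
      (∑ i, ((c i : ℝ) : ℂ) • Matrix.vecMulVec (u i) (star (u i))).trace
        = ((∑ i, c i : ℝ) : ℂ) := by
    intro c
    rw [Matrix.trace_sum, Complex.ofReal_sum]
    refine Finset.sum_congr rfl fun i _ => ?_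
    rw [Matrix.trace_smul, htrP, smul_eq_mul, mul_one]
  have hcard : (Finset.univ.erase i0).card = N_t - 1 := by
    rw [Finset.card_erase_of_mem (Finset.mem_univ i0), Finset.card_univ, Fintype.card_fin]
  have hcardR : ((Finset.univ.erase i0).card : ℝ) = n1 := by
    rw [hcard, hn1]
    have : (1:ℕ) ≤ N_t := by omega
    push_cast [Nat.cast_sub this]
    ring
  have hsumlam : ∑ i, lam i = P_T := by
    rw [← Finset.add_sum_erase _ lam (Finset.mem_univ i0), hlam0]
    have herase : ∑ i ∈ Finset.univ.erase i0, lam i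
        = n1 * ((P_T * nh2 - Γ₁ * σ2) / (nh2 * n1)) := by
      rw [Finset.sum_congr rfl (fun i hi => hlami i (Finset.ne_of_mem_erase hi))]
      rw [Finset.sum_const, nsmul_eq_mul, hcardR]
    rw [herase]
    field_simp
    ring
  have hRXtrre : R_X.trace.re = P_T := by
    rw [hRX, htrgen lam, Complex.ofReal_re, hsumlam]
  -- the inverse of R_X
  set S : Matrix (Fin N_t) (Fin N_t) ℂ :=
    ∑ i, (((lam i)⁻¹ : ℝ) : ℂ) • Matrix.vecMulVec (u i) (star (u i)) with hS
  have hRXS : R_X * S = 1 := by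
    rw [hRX, hS, Finset.sum_mul_sum]
    have hterm : ∀ i j, (((lam i : ℝ) : ℂ) • Matrix.vecMulVec (u i) (star (u i))) *
        ((((lam j)⁻¹ : ℝ) : ℂ) • Matrix.vecMulVec (u j) (star (u j)))
        = if j = i then Matrix.vecMulVec (u i) (star (u i)) else 0 := by
      intro i j
      rw [Matrix.smul_mul, Matrix.mul_smul, aux_mul_vmv, huon i j]
      by_cases hij : i = j
      · subst hij
        rw [if_pos rfl, if_pos rfl, one_smul, smul_smul, ← Complex.ofReal_mul,
          mul_inv_cancel₀ (hlampos i).ne', Complex.ofReal_one, one_smul]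
      · rw [if_neg hij, if_neg (fun hc => hij hc.symm), zero_smul, smul_zero, smul_zero]
    calc (∑ i, ∑ j, (((lam i : ℝ) : ℂ) • Matrix.vecMulVec (u i) (star (u i))) *
            ((((lam j)⁻¹ : ℝ) : ℂ) • Matrix.vecMulVec (u j) (star (u j))))
        = ∑ i, Matrix.vecMulVec (u i) (star (u i)) := by
          refine Finset.sum_congr rfl fun i _ => ?_
          rw [Finset.sum_congr rfl fun j _ => hterm i j]
          simp
      _ = 1 := hcompl
  have hRXinv : R_X⁻¹ = S := Matrix.inv_eq_right_inv hRXS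
  set a₁ : ℝ := Γ₁ * σ2 / nh2 with ha₁
  have ha₁pos : 0 < a₁ := by positivity
  have ha₁lt : a₁ < P_T := by
    rw [ha₁, div_lt_iff₀ hnh2pos]; linarith
  have hnha₁ : nh2 * a₁ = Γ₁ * σ2 := by
    rw [ha₁]; field_simp
  have hPTa : P_T * nh2 - Γ₁ * σ2 = nh2 * (P_T - a₁) := by
    rw [mul_sub, hnha₁]; ring
  have hRXinvtr : (R_X⁻¹).trace.re = 1 / a₁ + n1 ^ 2 / (P_T - a₁) := by
    rw [hRXinv, hS, htrgen (fun i => (lam i)⁻¹), Complex.ofReal_re]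
    rw [← Finset.add_sum_erase _ _ (Finset.mem_univ i0), hlam0]
    have herase : ∑ i ∈ Finset.univ.erase i0, (lam i)⁻¹
        = n1 * ((P_T * nh2 - Γ₁ * σ2) / (nh2 * n1))⁻¹ := by
      rw [Finset.sum_congr rfl (fun i hi => by rw [hlami i (Finset.ne_of_mem_erase hi)])]
      rw [Finset.sum_const, nsmul_eq_mul, hcardR]
    rw [herase, hPTa]
    have hPTane : P_T - a₁ ≠ 0 := ne_of_gt (by linarith)
    field_simp [ha₁]
  -- ### W₁ structure
  have hinv2 : ((Real.sqrt nh2 : ℝ) : ℂ)⁻¹ * ((Real.sqrt nh2 : ℝ) : ℂ)⁻¹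
      = ((nh2⁻¹ : ℝ) : ℂ) := by
    rw [← mul_inv]
    norm_cast
    rw [hsq2]
  have hvmv : Matrix.vecMulVec (u i0) (star (u i0))
      = ((nh2⁻¹ : ℝ) : ℂ) • Matrix.vecMulVec h (star h) := by
    rw [hu0]
    ext j k
    simp only [Matrix.vecMulVec_apply, Matrix.smul_apply, Pi.smul_apply, Pi.star_apply,
      smul_eq_mul, star_mul', star_inv₀, Complex.star_def, Complex.conj_ofReal]
    rw [← hinv2]
    ring
  have hW₁' : W₁ = ((lam i0 : ℝ) : ℂ) • Matrix.vecMulVec (u i0) (star (u i0)) := by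
    rw [hvmv, smul_smul, hlam0, ← Complex.ofReal_mul, hW₁]
    congr 1
    norm_cast
    rw [pow_two, ← div_div, div_eq_mul_inv (Γ₁ * σ2 / nh2)]
  have hRXW : R_X - W₁ = ∑ i ∈ Finset.univ.erase i0,
      ((lam i : ℝ) : ℂ) • Matrix.vecMulVec (u i) (star (u i)) := by
    rw [hRX, hW₁', ← Finset.add_sum_erase _ _ (Finset.mem_univ i0)]
    exact add_sub_cancel_left _ _
  have hRXWpsd : (R_X - W₁).PosSemidef := by
    rw [hRXW]
    refine Finset.sum_induction _ _ (fun a b ha hb => ha.add hb) Matrix.PosSemidef.zero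
      (fun i _ => aux_smul_vmv_psd (hlampos i).le _)
  have hW₁psd : W₁.PosSemidef := by
    rw [hW₁]
    exact aux_smul_vmv_psd (by positivity) h
  -- SINR at closed-form point
  have hudoth : ∀ i, i ≠ i0 → star (u i) ⬝ᵥ h = 0 := by
    intro i hi
    rw [hhu, dotProduct_smul, huon i i0, if_neg hi, smul_zero]
  have htrQW₁ : (Matrix.vecMulVec h (star h) * W₁).trace = ((Γ₁ * σ2 : ℝ) : ℂ) := by
    rw [aux_trace_vmv, hW₁, Matrix.smul_mulVec, aux_vmv_mulVec]
    simp only [dotProduct_smul, smul_eq_mul, hshc]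
    norm_cast
    field_simp
  have htrQRW : (Matrix.vecMulVec h (star h) * (R_X - W₁)).trace = 0 := by
    rw [aux_trace_vmv, hRXW, aux_sum_mulVec, aux_dot_sum]
    refine Finset.sum_eq_zero fun i hi => ?_
    rw [Matrix.smul_mulVec, aux_vmv_mulVec, hudoth i (Finset.ne_of_mem_erase hi),
      zero_smul, smul_zero, dotProduct_zero]
  -- ### assemble feasibility
  refine ⟨⟨hRXpd, le_of_eq hRXtrre, hRXWpsd, hW₁psd, ?_⟩, ?_⟩
  · rw [htrQW₁, htrQRW, Complex.ofReal_re, Complex.zero_re, mul_zero, sub_zero]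
  -- ### optimality
  intro W R Γ hRpd hRtr hRWpsd hWpsd hΓ hsinr
  set b : Fin N_t → ℝ := fun i => (star (u i) ⬝ᵥ R *ᵥ u i).re with hb
  set d : Fin N_t → ℝ := fun i => (star (u i) ⬝ᵥ R⁻¹ *ᵥ u i).re with hd
  have hxu : ∀ i, star (u i) ⬝ᵥ u i = 1 := fun i => by rw [huon i i, if_pos rfl]
  have hune : ∀ i, u i ≠ 0 := fun i h0 => by
    have := hxu i; rw [h0] at this; simp at this
  have hbpos : ∀ i, 0 < b i := fun i => by
    have := hRpd.re_dotProduct_pos (hune i)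
    simpa [hb, RCLike.re_to_complex] using this
  have hcs : ∀ i, 1 / b i ≤ d i := fun i => aux_cs R hRpd (u i) (hxu i)
  have htrR : R.trace.re = ∑ i, b i := by
    rw [aux_trace_expand u huon R, Complex.re_sum]
  have htrRinv : (R⁻¹).trace.re = ∑ i, d i := by
    rw [aux_trace_expand u huon R⁻¹, Complex.re_sum]
  set w : ℝ := (star h ⬝ᵥ W *ᵥ h).re with hw
  set r : ℝ := (star h ⬝ᵥ R *ᵥ h).re with hr
  have hrw_re : (star h ⬝ᵥ (R - W) *ᵥ h).re = r - w := by
    rw [Matrix.sub_mulVec, dotProduct_sub, Complex.sub_re]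
  have hsinr' : w - Γ * (r - w) ≥ Γ * σ2 := by
    rw [aux_trace_vmv, aux_trace_vmv, hrw_re] at hsinr
    exact hsinr
  have hwr : w ≤ r := by
    have h0 := hRWpsd.re_dotProduct_nonneg h
    rw [RCLike.re_to_complex, hrw_re] at h0
    linarith
  have hrge : Γ * σ2 ≤ r := by
    have := mul_nonneg hΓ (sub_nonneg.mpr hwr)
    linarith [hsinr', this]
  have hb0r : nh2 * b i0 = r := by
    rw [hr, hhu, Matrix.mulVec_smul, star_smul, smul_dotProduct,
      dotProduct_smul]
    simp only [smul_eq_mul, Complex.star_def, Complex.conj_ofReal]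
    rw [Complex.re_ofReal_mul, Complex.re_ofReal_mul, ← mul_assoc, hsq2]
  have herane : (Finset.univ.erase i0).Nonempty := by
    rw [← Finset.card_pos, hcard]; omega
  set s : ℝ := ∑ i ∈ Finset.univ.erase i0, b i with hs
  have hspos : 0 < s := Finset.sum_pos (fun i _ => hbpos i) herane
  have hsum_b : b i0 + s = R.trace.re := by
    rw [htrR, ← Finset.add_sum_erase _ b (Finset.mem_univ i0)]
  set B : ℝ := b i0 with hB
  have hBpos : 0 < B := hbpos i0
  have hB_lt : B < P_T := by linarith [hRtr, hspos, hsum_b]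
  have hs_le : s ≤ P_T - B := by linarith [hRtr, hsum_b]
  have hPB : 0 < P_T - B := by linarith
  have hsed : n1 ^ 2 / s ≤ ∑ i ∈ Finset.univ.erase i0, 1 / b i := by
    have hS := Finset.sq_sum_div_le_sum_sq_div (Finset.univ.erase i0) (fun _ => (1:ℝ))
      (g := b) (fun i _ => hbpos i)
    have h1 : ∑ _i ∈ Finset.univ.erase i0, (1:ℝ) = n1 := by
      rw [Finset.sum_const, nsmul_eq_mul, mul_one, hcardR]
    calc n1 ^ 2 / s = (∑ _i ∈ Finset.univ.erase i0, (1:ℝ)) ^ 2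
          / ∑ i ∈ Finset.univ.erase i0, b i := by rw [h1, ← hs]
      _ ≤ ∑ i ∈ Finset.univ.erase i0, (1:ℝ) ^ 2 / b i := hS
      _ = ∑ i ∈ Finset.univ.erase i0, 1 / b i := by
          exact Finset.sum_congr rfl fun i _ => by rw [one_pow]
  have hsum_d : 1 / B + n1 ^ 2 / (P_T - B) ≤ ∑ i, d i := by
    have h1 : ∑ i, d i = d i0 + ∑ i ∈ Finset.univ.erase i0, d i :=
      (Finset.add_sum_erase _ d (Finset.mem_univ i0)).symm
    have h2 : ∑ i ∈ Finset.univ.erase i0, (1 : ℝ) / b i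
        ≤ ∑ i ∈ Finset.univ.erase i0, d i :=
      Finset.sum_le_sum fun i _ => hcs i
    have h3 : n1 ^ 2 / (P_T - B) ≤ n1 ^ 2 / s := by gcongr
    have h4 := hcs i0
    linarith [h1, h2, h3, h4, hsed]
  have hBc : Γ * σ2 ≤ nh2 * B := by rw [hB, hb0r]; exact hrge
  have hPa : 0 < P_T - a₁ := by linarith
  have heq' : nh2 / (1 + Γ₁) = ρ * σ2 * (n1 ^ 2 / (P_T - a₁) ^ 2 - 1 / a₁ ^ 2) := by
    rw [heq]
    have e1 : (nh2 * n1) ^ 2 / (P_T * nh2 - Γ₁ * σ2) ^ 2 = n1 ^ 2 / (P_T - a₁) ^ 2 := by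
      rw [hPTa, mul_pow, mul_pow, mul_div_mul_left _ _ (pow_ne_zero 2 hnh2ne)]
    have e2 : nh2 ^ 2 / (Γ₁ ^ 2 * σ2 ^ 2) = 1 / a₁ ^ 2 := by
      rw [ha₁]
      field_simp
    rw [e1, e2]
  have h1Γ₁ : (0:ℝ) < 1 + Γ₁ := by linarith
  have h1Γ : (0:ℝ) < 1 + Γ := by linarith
  have stepA : Real.log (1 + Γ) - Real.log (1 + Γ₁) ≤ (Γ - Γ₁) / (1 + Γ₁) := by
    have hx : 0 < (1 + Γ) / (1 + Γ₁) := by positivity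
    have hlog := Real.log_le_sub_one_of_pos hx
    rw [Real.log_div (ne_of_gt h1Γ) (ne_of_gt h1Γ₁)] at hlog
    have heq2 : (1 + Γ) / (1 + Γ₁) - 1 = (Γ - Γ₁) / (1 + Γ₁) := by
      field_simp
      ring
    linarith [hlog, heq2.le, heq2.ge]
  have stepB : 1 / a₁ - (B - a₁) / a₁ ^ 2 ≤ 1 / B := by
    have key : 1 / B - (1 / a₁ - (B - a₁) / a₁ ^ 2) = (B - a₁) ^ 2 / (B * a₁ ^ 2) := by
      field_simp
      ring
    have pos : 0 ≤ (B - a₁) ^ 2 / (B * a₁ ^ 2) := by positivity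
    linarith
  have stepC : n1 ^ 2 / (P_T - a₁) + n1 ^ 2 * (B - a₁) / (P_T - a₁) ^ 2
      ≤ n1 ^ 2 / (P_T - B) := by
    have key : n1 ^ 2 / (P_T - B) - (n1 ^ 2 / (P_T - a₁) + n1 ^ 2 * (B - a₁) / (P_T - a₁) ^ 2)
        = n1 ^ 2 * (B - a₁) ^ 2 / ((P_T - B) * (P_T - a₁) ^ 2) := by
      field_simp
      ring
    have pos : 0 ≤ n1 ^ 2 * (B - a₁) ^ 2 / ((P_T - B) * (P_T - a₁) ^ 2) := by positivity
    linarith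
  set μ : ℝ := nh2 / (σ2 * (1 + Γ₁)) with hμdef
  have hμK : ρ * (n1 ^ 2 / (P_T - a₁) ^ 2 - 1 / a₁ ^ 2) = μ := by
    have h2 : ρ * σ2 * (n1 ^ 2 / (P_T - a₁) ^ 2 - 1 / a₁ ^ 2) * (1 + Γ₁) = nh2 := by
      rw [← heq']
      field_simp
    rw [hμdef, eq_div_iff (by positivity : σ2 * (1 + Γ₁) ≠ 0)]
    linear_combination h2
  have main : ρ * (1 / a₁ + n1 ^ 2 / (P_T - a₁)) + (B - a₁) * μ
      ≤ ρ * (1 / B + n1 ^ 2 / (P_T - B)) := by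
    rw [← hμK]
    have hB' : ρ * (1 / a₁ - (B - a₁) / a₁ ^ 2) ≤ ρ * (1 / B) :=
      mul_le_mul_of_nonneg_left stepB hρ.le
    have hC' : ρ * (n1 ^ 2 / (P_T - a₁) + n1 ^ 2 * (B - a₁) / (P_T - a₁) ^ 2)
        ≤ ρ * (n1 ^ 2 / (P_T - B)) := mul_le_mul_of_nonneg_left stepC hρ.le
    have hexp : ρ * (1 / a₁ + n1 ^ 2 / (P_T - a₁))
          + (B - a₁) * (ρ * (n1 ^ 2 / (P_T - a₁) ^ 2 - 1 / a₁ ^ 2))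
        = ρ * (1 / a₁ - (B - a₁) / a₁ ^ 2)
          + ρ * (n1 ^ 2 / (P_T - a₁) + n1 ^ 2 * (B - a₁) / (P_T - a₁) ^ 2) := by
      ring
    rw [hexp]
    linarith [hB', hC']
  have h4 : (Γ - Γ₁) * σ2 ≤ (B - a₁) * nh2 := by
    have hx : (B - a₁) * nh2 = nh2 * B - nh2 * a₁ := by ring
    rw [hx, hnha₁]
    linarith [hBc]
  have h5 : (Γ - Γ₁) / (1 + Γ₁) ≤ (B - a₁) * μ := by
    rw [div_le_iff₀ h1Γ₁, hμdef]
    have hr2 : (B - a₁) * (nh2 / (σ2 * (1 + Γ₁))) * (1 + Γ₁) = (B - a₁) * nh2 / σ2 := by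
      field_simp
    rw [hr2, le_div_iff₀ hσ]
    linarith [h4]
  have hTineq : ρ * (1 / B + n1 ^ 2 / (P_T - B)) ≤ ρ * (R⁻¹).trace.re := by
    rw [htrRinv]
    exact mul_le_mul_of_nonneg_left hsum_d hρ.le
  rw [hRXinvtr]
  linarith [stepA, main, h5, hTineq]
end

section
/- Let σ² > 0, g ≥ 0, and let ℓ, Γ, a, T be reals with a ≥ ℓ·g and T ≥ a + Γσ². Define Γ̂ = (Γσ² + ℓ·g)/(σ² + g). Then T − Γ̂·g ≥ Γ̂·σ². -/
theorem div_mul_add_div_mul_of_add_ne_zero {K : Type*} [Field K] (x s g : K) (h : s + g ≠ 0) :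
    x / (s + g) * g + x / (s + g) * s = x := by
  rw [← mul_add, add_comm g s, div_mul_cancel₀ x h]

/-- feasibility of the constructed point in eq. (33) of the paper:
if `σ² > 0`, `g ≥ 0`, `a ≥ ℓ g`, `T ≥ a + Γ σ²` and `Γ̂ = (Γσ² + ℓ g)/(σ² + g)`,
then `T − Γ̂ g ≥ Γ̂ σ²`. -/
theorem constructed_point_feasible (σ2 g ℓ Γ a T : ℝ)
    (hσ : 0 < σ2) (hg : 0 ≤ g) (ha : a ≥ ℓ * g) (hT : T ≥ a + Γ * σ2) :
    T - ((Γ * σ2 + ℓ * g) / (σ2 + g)) * g ≥ ((Γ * σ2 + ℓ * g) / (σ2 + g)) * σ2 := by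
  have hden : σ2 + g ≠ 0 := by positivity
  -- `Γ̂ (σ² + g) = Γ σ² + ℓ g`, so the claim reduces to `T ≥ Γ σ² + ℓ g`.
  have hsplit := div_mul_add_div_mul_of_add_ne_zero (Γ * σ2 + ℓ * g) σ2 g hden
  linarith
end

section
/- Let K ≥ 1 be an integer, ε > 0, and set δ_ε = (exp(ε/K) − 1)/2. Let Γ, Γ̂, ℓ, u : {1,…,K} → ℝ satisfy 0 ≤ ℓ_k ≤ Γ̂_k and Γ̂_k ≤ Γ_k ≤ u_k for every k. Suppose there is an index k* such that (Γ_{k*} − Γ̂_{k*})/(1 + Γ̂_{k*}) ≥ (Γ_k − Γ̂_k)/(1 + Γ̂_k) for all k, and u_{k*} − ℓ_{k*} ≤ 2δ_ε. Then Σ_{k=1}^K log(1 + Γ_k) − Σ_{k=1}^K log(1 + Γ̂_k) ≤ ε. -/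
/-! Since `(1 + Γ k) / (1 + Γ̂ k) = 1 + (Γ k − Γ̂ k)/(1 + Γ̂ k)`, each summand of the gap is the
logarithm of one plus a relative gap. All relative gaps are bounded by that of `k*`, which is at
most the absolute gap `Γ k* − Γ̂ k* ≤ u k* − ℓ k* ≤ exp(ε/K) − 1` because `Γ̂ k* ≥ 0`. Hence every
summand is at most `ε/K`, and the `K` summands add up to at most `ε`. -/

open Finset

theorem log_one_add_sub_log_one_add_le {x y t : ℝ} (hx : 0 < 1 + x) (hxy : x ≤ y)
    (hgap : (y - x) / (1 + x) ≤ Real.exp t - 1) :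
    Real.log (1 + y) - Real.log (1 + x) ≤ t := by
  have hy : 0 < 1 + y := by linarith
  have hratio : (1 + y) / (1 + x) = 1 + (y - x) / (1 + x) := by field_simp; ring
  rw [← Real.log_div hy.ne' hx.ne', Real.log_le_iff_le_exp (div_pos hy hx), hratio]
  linarith

theorem sum_log_one_add_sub_le_card_mul {ι : Type*} [Fintype ι] (Γ Γhat : ι → ℝ) (t : ℝ)
    (hpos : ∀ k, 0 < 1 + Γhat k) (hle : ∀ k, Γhat k ≤ Γ k)
    (hgap : ∀ k, (Γ k - Γhat k) / (1 + Γhat k) ≤ Real.exp t - 1) :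
    (∑ k, Real.log (1 + Γ k)) - (∑ k, Real.log (1 + Γhat k)) ≤ Fintype.card ι * t := by
  rw [← sum_sub_distrib, ← nsmul_eq_mul]
  exact sum_le_card_nsmul _ _ _ fun k _ ↦
    log_one_add_sub_log_one_add_le (hpos k) (hle k) (hgap k)

theorem bnb_termination_gap_general (K : ℕ) (ε : ℝ)
    (Γ Γhat ℓ u : Fin K → ℝ)
    (hℓ0 : ∀ k, 0 ≤ ℓ k) (hℓhat : ∀ k, ℓ k ≤ Γhat k)
    (hhatΓ : ∀ k, Γhat k ≤ Γ k) (hΓu : ∀ k, Γ k ≤ u k)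
    (kstar : Fin K)
    (hmax : ∀ k, (Γ k - Γhat k) / (1 + Γhat k) ≤ (Γ kstar - Γhat kstar) / (1 + Γhat kstar))
    (hwidth : u kstar - ℓ kstar ≤ 2 * ((Real.exp (ε / K) - 1) / 2)) :
    (∑ k, Real.log (1 + Γ k)) - (∑ k, Real.log (1 + Γhat k)) ≤ ε := by
  have hhat0 : ∀ k, 0 ≤ Γhat k := fun k ↦ (hℓ0 k).trans (hℓhat k)
  have hgap_star : (Γ kstar - Γhat kstar) / (1 + Γhat kstar) ≤ Real.exp (ε / K) - 1 :=
    calc (Γ kstar - Γhat kstar) / (1 + Γhat kstar)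
        ≤ Γ kstar - Γhat kstar :=
          div_le_self (sub_nonneg.2 (hhatΓ kstar)) (by linarith [hhat0 kstar])
      _ ≤ u kstar - ℓ kstar := by linarith [hΓu kstar, hℓhat kstar]
      _ ≤ Real.exp (ε / K) - 1 := by linarith
  have hK : (K : ℝ) ≠ 0 := Nat.cast_ne_zero.2 kstar.pos.ne'
  calc (∑ k, Real.log (1 + Γ k)) - (∑ k, Real.log (1 + Γhat k))
      ≤ Fintype.card (Fin K) * (ε / K) :=
        sum_log_one_add_sub_le_card_mul Γ Γhat _ (fun k ↦ by linarith [hhat0 k]) hhatΓ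
          fun k ↦ (hmax k).trans hgap_star
    _ = ε := by rw [Fintype.card_fin]; field_simp

/-- Lemma 3, quantitative form: if `ℓ k ≤ Γ̂ k ≤ Γ k ≤ u k`, `0 ≤ ℓ k`,
`k*` maximizes the relative gap `(Γ k − Γ̂ k)/(1 + Γ̂ k)`, and `u k* − ℓ k* ≤ 2 δ_ε`
with `δ_ε = (exp(ε/K) − 1)/2`, then `Σ log(1+Γ k) − Σ log(1+Γ̂ k) ≤ ε`. -/
theorem bnb_termination_gap (K : ℕ) (hK : 1 ≤ K) (ε : ℝ) (hε : 0 < ε)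
    (Γ Γhat ℓ u : Fin K → ℝ)
    (hℓ0 : ∀ k, 0 ≤ ℓ k) (hℓhat : ∀ k, ℓ k ≤ Γhat k)
    (hhatΓ : ∀ k, Γhat k ≤ Γ k) (hΓu : ∀ k, Γ k ≤ u k)
    (kstar : Fin K)
    (hmax : ∀ k, (Γ k - Γhat k) / (1 + Γhat k) ≤ (Γ kstar - Γhat kstar) / (1 + Γhat kstar))
    (hwidth : u kstar - ℓ kstar ≤ 2 * ((Real.exp (ε / K) - 1) / 2)) :
    (∑ k, Real.log (1 + Γ k)) - (∑ k, Real.log (1 + Γhat k)) ≤ ε :=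
  bnb_termination_gap_general K ε Γ Γhat ℓ u hℓ0 hℓhat hhatΓ hΓu kstar hmax hwidth
end
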